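/- arXiv:1810.04205 — 4 statements merged into one kernel-verified Lean document; each statement's English description precedes it below -/
import Mathlib

section
/- Let (X,d) be a metric space, let E and F be two nonempty closed subsets of X with F ⊂ E, and let u₀ : E → ℝ be a K-Lipschitz function such that λ₀ := lip(u₀, F) < K. Then for every ε > 0 there exists a function u : E → ℝ such that |u − u₀| ≤ ε on E, u = u₀ on F, and lip(u, B) < K for every bounded subset B of E. -/
open Metric Set MeasureTheory

/-- `lipOn f s` is the Lipschitz constant of `f` on `s`:
the infimum of all `L > 0` such that `|f x - f y| ≤ L * dist x y` for all `x, y ∈ s`. -/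
noncomputable def lipOn {X : Type*} [PseudoMetricSpace X] (f : X → ℝ) (s : Set X) : ℝ :=
  sInf {L : ℝ | 0 < L ∧ ∀ x ∈ s, ∀ y ∈ s, |f x - f y| ≤ L * dist x y}

/-- `f` is `K`-Lipschitz on `s`. -/
def IsLipschitzWithOn {X : Type*} [PseudoMetricSpace X] (K : ℝ) (f : X → ℝ) (s : Set X) : Prop :=
  ∀ x ∈ s, ∀ y ∈ s, |f x - f y| ≤ K * dist x y

/-!
Extend `u₀|F` by McShane to an `l`-Lipschitz `v` on the whole space, with `lipOn u₀ F < l < K`,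
and tilt `u₀` to `w = u₀ - c · σ(u₀ - u₀ x₀)` with `σ t = t / (1 + |t|)` and `x₀ ∈ F`. Since
`σ' = (1 + |t|)⁻²`, on a bounded set, where `u₀ - u₀ x₀` stays in some `[-M, M]`, the tilt shrinks
the Lipschitz constant of `u₀` by the factor `1 - c / (1 + M)²`, while `|w - u₀| ≤ c` everywhere.
Clamping `v` into the band `[w - c, w + c]` gives `u`: it equals `v = u₀` on `F`, stays within
`2c` of `u₀`, and on every bounded set is Lipschitz with constant `max l ((1 - c / (1 + M)²) K) < K`.
-/

noncomputable def softSign (t : ℝ) : ℝ := t / (1 + |t|)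

lemma abs_softSign_le_one (t : ℝ) : |softSign t| ≤ 1 := by
  have h : (0 : ℝ) < 1 + |t| := by positivity
  rw [softSign, abs_div, abs_of_pos h, div_le_one h]
  linarith

lemma softSign_sub_softSign (x y : ℝ) :
    softSign x - softSign y = (x - y + (x * |y| - y * |x|)) / ((1 + |x|) * (1 + |y|)) := by
  unfold softSign
  field_simp
  ring

lemma softSign_sub_softSign_le {x y : ℝ} (hxy : y ≤ x) : softSign x - softSign y ≤ x - y := by
  have hd : 0 ≤ x - y := sub_nonneg.2 hxy
  have hx0 := abs_nonneg x
  have hy0 := abs_nonneg y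
  have hmono : y * |y| ≤ x * |x| := by
    rcases abs_cases x with ⟨hx, _⟩ | ⟨hx, _⟩ <;> rcases abs_cases y with ⟨hy, _⟩ | ⟨hy, _⟩ <;>
      rw [hx, hy] <;> nlinarith
  rw [softSign_sub_softSign, div_le_iff₀ (by positivity)]
  nlinarith [mul_nonneg hd (mul_nonneg hx0 hy0)]

lemma div_sq_le_softSign_sub_softSign {x y M : ℝ} (hxy : y ≤ x) (hx : |x| ≤ M) (hy : |y| ≤ M) :
    (x - y) / (1 + M) ^ 2 ≤ softSign x - softSign y := by
  have hM : 0 ≤ M := (abs_nonneg x).trans hx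
  have hcross : 0 ≤ x * |y| - y * |x| := by
    rcases abs_cases x with ⟨hx, _⟩ | ⟨hx, _⟩ <;> rcases abs_cases y with ⟨hy, _⟩ | ⟨hy, _⟩ <;>
      rw [hx, hy] <;> nlinarith
  have hprod : (1 + |x|) * (1 + |y|) ≤ (1 + M) ^ 2 := by
    nlinarith [abs_nonneg x, abs_nonneg y]
  rw [softSign_sub_softSign, div_le_div_iff₀ (by positivity) (by positivity)]
  calc (x - y) * ((1 + |x|) * (1 + |y|)) ≤ (x - y) * (1 + M) ^ 2 := by gcongr
    _ ≤ (x - y + (x * |y| - y * |x|)) * (1 + M) ^ 2 := by gcongr; linarith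

lemma div_one_add_sq_le_one {c M : ℝ} (hc₁ : c ≤ 1) (hM : 0 ≤ M) : c / (1 + M) ^ 2 ≤ 1 := by
  rw [div_le_one (by positivity)]
  nlinarith

lemma abs_sub_mul_softSign_sub_le {c M x y : ℝ} (hc₀ : 0 ≤ c) (hc₁ : c ≤ 1)
    (hx : |x| ≤ M) (hy : |y| ≤ M) :
    |(x - c * softSign x) - (y - c * softSign y)| ≤ (1 - c / (1 + M) ^ 2) * |x - y| := by
  wlog hxy : y ≤ x generalizing x y
  · rw [abs_sub_comm, abs_sub_comm x]
    exact this hy hx (le_of_not_ge hxy)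
  have hd : 0 ≤ x - y := sub_nonneg.2 hxy
  set δ := softSign x - softSign y
  have hupper : c * δ ≤ c * (x - y) :=
    mul_le_mul_of_nonneg_left (softSign_sub_softSign_le hxy) hc₀
  have hlower : c / (1 + M) ^ 2 * (x - y) ≤ c * δ :=
    calc c / (1 + M) ^ 2 * (x - y) = c * ((x - y) / (1 + M) ^ 2) := by ring
      _ ≤ c * δ := mul_le_mul_of_nonneg_left (div_sq_le_softSign_sub_softSign hxy hx hy) hc₀
  have hcM := div_one_add_sq_le_one hc₁ ((abs_nonneg x).trans hx)
  rw [show (x - c * softSign x) - (y - c * softSign y) = (x - y) - c * δ by ring,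
    abs_of_nonneg hd, abs_le]
  constructor <;> nlinarith

lemma abs_max_sub_min_add_sub_le (a b : ℝ) {c : ℝ} (hc : 0 ≤ c) :
    |max (a - c) (min b (a + c)) - a| ≤ c := by
  have := max_le (by linarith : a - c ≤ a + c) (min_le_right b (a + c))
  have := le_max_left (a - c) (min b (a + c))
  exact abs_sub_le_iff.2 ⟨by linarith, by linarith⟩

lemma max_sub_min_add_eq {a b c : ℝ} (h : |b - a| ≤ c) : max (a - c) (min b (a + c)) = b := by
  rw [abs_le] at h
  rw [min_eq_left (by linarith), max_eq_right (by linarith)]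

namespace IsLipschitzWithOn

variable {X : Type*} [PseudoMetricSpace X] {f g : X → ℝ} {s t : Set X} {K K' : ℝ}

lemma mono (hf : IsLipschitzWithOn K f s) (hts : t ⊆ s) : IsLipschitzWithOn K f t :=
  fun x hx y hy => hf x (hts hx) y (hts hy)

lemma weaken (hf : IsLipschitzWithOn K f s) (hKK' : K ≤ K') : IsLipschitzWithOn K' f s :=
  fun x hx y hy => (hf x hx y hy).trans (by gcongr)

lemma add_const (hf : IsLipschitzWithOn K f s) (a : ℝ) :
    IsLipschitzWithOn K (fun x => f x + a) s := by
  simpa [IsLipschitzWithOn] using hf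

lemma sub_const (hf : IsLipschitzWithOn K f s) (a : ℝ) :
    IsLipschitzWithOn K (fun x => f x - a) s := by
  simpa [IsLipschitzWithOn] using hf

lemma max (hf : IsLipschitzWithOn K f s) (hg : IsLipschitzWithOn K g s) :
    IsLipschitzWithOn K (fun x => Max.max (f x) (g x)) s := fun x hx y hy =>
  (abs_max_sub_max_le_max _ _ _ _).trans (max_le (hf x hx y hy) (hg x hx y hy))

lemma min (hf : IsLipschitzWithOn K f s) (hg : IsLipschitzWithOn K g s) :
    IsLipschitzWithOn K (fun x => Min.min (f x) (g x)) s := fun x hx y hy =>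
  (abs_min_sub_min_le_max _ _ _ _).trans (max_le (hf x hx y hy) (hg x hx y hy))

lemma lipOn_le (hf : IsLipschitzWithOn K f s) (hK : 0 < K) : lipOn f s ≤ K :=
  csInf_le ⟨0, fun _ hL => hL.1.le⟩ ⟨hK, hf⟩

lemma exists_lt_of_lipOn_lt (hf : IsLipschitzWithOn K f s) (hlt : lipOn f s < K) :
    ∃ l, 0 < l ∧ l < K ∧ IsLipschitzWithOn l f s := by
  have hK : 0 < K := (Real.sInf_nonneg fun _ hL => hL.1.le).trans_lt hlt
  obtain ⟨l, ⟨hl, hfl⟩, hlK⟩ := exists_lt_of_csInf_lt (by exact ⟨K, hK, hf⟩) hlt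
  exact ⟨l, hl, hlK, hfl⟩

lemma exists_extension (hf : IsLipschitzWithOn K f s) (hK : 0 ≤ K) :
    ∃ g : X → ℝ, IsLipschitzWithOn K g univ ∧ EqOn f g s := by
  have hf' : LipschitzOnWith K.toNNReal f s := by
    refine LipschitzOnWith.of_dist_le_mul fun x hx y hy => ?_
    simpa [Real.dist_eq, Real.coe_toNNReal K hK] using hf x hx y hy
  obtain ⟨g, hg, hfg⟩ := hf'.extend_real
  refine ⟨g, fun x _ y _ => ?_, hfg⟩
  simpa [Real.dist_eq, Real.coe_toNNReal K hK] using hg.dist_le_mul x y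

lemma sub_mul_softSign (hf : IsLipschitzWithOn K f s) {c M a : ℝ} (hc₀ : 0 ≤ c)
    (hc₁ : c ≤ 1) (hM : ∀ x ∈ s, |f x - a| ≤ M) :
    IsLipschitzWithOn ((1 - c / (1 + M) ^ 2) * K) (fun x => f x - c * softSign (f x - a)) s := by
  intro x hx y hy
  have hfactor : 0 ≤ 1 - c / (1 + M) ^ 2 :=
    sub_nonneg.2 (div_one_add_sq_le_one hc₁ ((abs_nonneg _).trans (hM x hx)))
  calc |(f x - c * softSign (f x - a)) - (f y - c * softSign (f y - a))|
      = |(f x - a - c * softSign (f x - a)) - (f y - a - c * softSign (f y - a))| := by ring_nf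
    _ ≤ (1 - c / (1 + M) ^ 2) * |(f x - a) - (f y - a)| :=
      abs_sub_mul_softSign_sub_le hc₀ hc₁ (hM x hx) (hM y hy)
    _ = (1 - c / (1 + M) ^ 2) * |f x - f y| := by ring_nf
    _ ≤ (1 - c / (1 + M) ^ 2) * K * dist x y := by
      rw [mul_assoc]; exact mul_le_mul_of_nonneg_left (hf x hx y hy) hfactor

lemma exists_lt_sub_mul_softSign (hf : IsLipschitzWithOn K f s) (hK : 0 < K) {x₀ : X}
    (hx₀ : x₀ ∈ s) {c : ℝ} (hc₀ : 0 < c) (hc₁ : c ≤ 1) (ht : Bornology.IsBounded t)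
    (hts : t ⊆ s) :
    ∃ L < K, IsLipschitzWithOn L (fun x => f x - c * softSign (f x - f x₀)) t := by
  obtain ⟨r, hr, htr⟩ := ht.subset_closedBall_lt 0 x₀
  have hft (x : X) (hx : x ∈ t) : |f x - f x₀| ≤ K * r :=
    (hf x (hts hx) x₀ hx₀).trans (by gcongr; exact htr hx)
  have hcM : 0 < c / (1 + K * r) ^ 2 := by positivity
  exact ⟨_, by nlinarith, (hf.mono hts).sub_mul_softSign hc₀.le hc₁ hft⟩

end IsLipschitzWithOn

theorem stmt_6_general {X : Type*} [MetricSpace X] (E F : Set X)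
    (hFne : F.Nonempty)
    (hFE : F ⊆ E) (K : ℝ) (u₀ : X → ℝ) (hu₀ : IsLipschitzWithOn K u₀ E)
    (hlt : lipOn u₀ F < K) (ε : ℝ) (hε : 0 < ε) :
    ∃ u : X → ℝ,
      (∀ x ∈ E, |u x - u₀ x| ≤ ε) ∧
      (∀ x ∈ F, u x = u₀ x) ∧
      (∀ B ⊆ E, Bornology.IsBounded B → lipOn u B < K) := by
  obtain ⟨l, hl₀, hlK, hl⟩ := (hu₀.mono hFE).exists_lt_of_lipOn_lt hlt
  obtain ⟨v, hv, hu₀v⟩ := hl.exists_extension hl₀.le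
  obtain ⟨x₀, hx₀⟩ := hFne
  set c := min 1 (ε / 2)
  have hc₀ : 0 < c := lt_min one_pos (half_pos hε)
  set w : X → ℝ := fun x => u₀ x - c * softSign (u₀ x - u₀ x₀)
  have hwu₀ (x : X) : |w x - u₀ x| ≤ c := by
    simpa [w, abs_mul, abs_of_pos hc₀] using
      mul_le_mul_of_nonneg_left (abs_softSign_le_one (u₀ x - u₀ x₀)) hc₀.le
  refine ⟨fun x => max (w x - c) (min (v x) (w x + c)), fun x _ => ?_, fun x hx => ?_,
    fun B hBE hB => ?_⟩
  · calc |max (w x - c) (min (v x) (w x + c)) - u₀ x|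
        ≤ |max (w x - c) (min (v x) (w x + c)) - w x| + |w x - u₀ x| := abs_sub_le _ _ _
      _ ≤ c + c := add_le_add (abs_max_sub_min_add_sub_le _ _ hc₀.le) (hwu₀ x)
      _ ≤ ε := by linarith [min_le_right 1 (ε / 2)]
  · rw [hu₀v hx]
    exact max_sub_min_add_eq (by rw [abs_sub_comm, ← hu₀v hx]; exact hwu₀ x)
  · obtain ⟨L, hLK, hw⟩ :=
      hu₀.exists_lt_sub_mul_softSign (hl₀.trans hlK) (hFE hx₀) hc₀ (min_le_left _ _) hB hBE
    have hwB := hw.weaken (le_max_right l L)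
    have hvB := (hv.mono (subset_univ B)).weaken (le_max_left l L)
    exact (((hwB.sub_const c).max (hvB.min (hwB.add_const c))).lipOn_le
      (hl₀.trans_le (le_max_left l L))).trans_lt (max_lt hlK hLK)

/-- Theorem: approximation, in a metric space, of a `K`-Lipschitz function `u₀ : E → ℝ`
whose Lipschitz constant on a closed subset `F ⊆ E` is smaller than `K`, by a function
coinciding with `u₀` on `F` and with Lipschitz constant `< K` on every bounded subset. -/
theorem stmt_6 {X : Type*} [MetricSpace X] (E F : Set X)
    (hE : IsClosed E) (hF : IsClosed F) (hEne : E.Nonempty) (hFne : F.Nonempty)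
    (hFE : F ⊆ E) (K : ℝ) (u₀ : X → ℝ) (hu₀ : IsLipschitzWithOn K u₀ E)
    (hlt : lipOn u₀ F < K) (ε : ℝ) (hε : 0 < ε) :
    ∃ u : X → ℝ,
      (∀ x ∈ E, |u x - u₀ x| ≤ ε) ∧
      (∀ x ∈ F, u x = u₀ x) ∧
      (∀ B ⊆ E, Bornology.IsBounded B → lipOn u B < K) :=
  stmt_6_general E F hFne hFE K u₀ hu₀ hlt ε hε
end

section
/- Let X be a Banach space, let Ω ⊂ X be open, and let K ≥ 0. If w : cl(Ω) → ℝ is continuous on cl(Ω), is Fréchet differentiable at every point of Ω, is K-Lipschitz on ∂Ω, and satisfies ‖Dw(x)‖_* ≤ K for every x ∈ Ω, then w is K-Lipschitz on cl(Ω). -/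
/-!
If every point of `[x, y]` other than `y` lies in `Ω`, the mean value theorem for
`t ↦ w (lineMap x y t)` gives `|w x - w y| ≤ K ‖x - y‖`. Otherwise let `p` be the point of
`[x, y] \ Ω` closest to `x`, and `q` the point of `[y, p] \ Ω` closest to `y`. Both lie on `∂Ω`,
so the bound holds on `[x, p]` and `[y, q]` by the first case and between `q` and `p` by the
Lipschitz bound on `∂Ω`; distances add up along a segment.
-/

open Metric Set MeasureTheory

open AffineMap Convex

section

variable {X : Type*} [NormedAddCommGroup X] [NormedSpace ℝ X]

theorem abs_sub_le_mul_dist_of_mem_segment {w : X → ℝ} {K : ℝ} {x p y : X}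
    (hp : p ∈ [x -[ℝ] y]) (hxp : |w x - w p| ≤ K * dist x p) (hpy : |w p - w y| ≤ K * dist p y) :
    |w x - w y| ≤ K * dist x y :=
  calc |w x - w y| ≤ |w x - w p| + |w p - w y| := abs_sub_le _ _ _
    _ ≤ K * dist x p + K * dist p y := add_le_add hxp hpy
    _ = K * dist x y := by rw [← mul_add, dist_add_dist_of_mem_segment hp]

theorem isCompact_segment (x y : X) : IsCompact [x -[ℝ] y] := by
  rw [segment_eq_image_lineMap]
  exact isCompact_Icc.image lineMap_continuous

theorem IsOpen.exists_notMem_segment_diff_subset {Ω : Set X} (hΩ : IsOpen Ω) {x y z : X}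
    (hz : z ∈ [x -[ℝ] y]) (hzΩ : z ∉ Ω) :
    ∃ p ∈ [x -[ℝ] y], p ∉ Ω ∧ [x -[ℝ] p] \ {p} ⊆ Ω := by
  obtain ⟨p, ⟨hp, hpΩ⟩, hmin⟩ :=
    ((isCompact_segment x y).inter_right hΩ.isClosed_compl).exists_isMinOn
      ⟨z, hz, hzΩ⟩ (continuous_const.dist continuous_id).continuousOn
  refine ⟨p, hp, hpΩ, fun q ⟨hq, hqp⟩ => ?_⟩
  by_contra hqΩ
  have hpq : dist x p ≤ dist x q :=
    hmin ⟨(convex_segment x y).segment_subset (left_mem_segment ℝ x y) hp hq, hqΩ⟩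
  have hqp_pos : 0 < dist q p := dist_pos.2 hqp
  linarith [dist_add_dist_of_mem_segment hq]

theorem IsOpen.exists_mem_frontier_segment_diff_subset {Ω : Set X} (hΩ : IsOpen Ω) {x y z : X}
    (hx : x ∈ closure Ω) (hz : z ∈ [x -[ℝ] y]) (hzΩ : z ∉ Ω) :
    ∃ p ∈ [x -[ℝ] y], p ∈ frontier Ω ∧ [x -[ℝ] p] \ {p} ⊆ Ω := by
  obtain ⟨p, hp, hpΩ, hxp⟩ := hΩ.exists_notMem_segment_diff_subset hz hzΩ
  refine ⟨p, hp, hΩ.frontier_eq ▸ ⟨?_, hpΩ⟩, hxp⟩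
  rcases eq_or_ne x p with rfl | hne
  · exact hx
  refine closure_mono (fun q hq => hxp ⟨openSegment_subset_segment ℝ x p hq, ?_⟩)
    (segment_subset_closure_openSegment (right_mem_segment ℝ x p))
  rintro rfl
  exact hne ((right_mem_openSegment_iff).1 hq)

variable {Ω : Set X} {K : ℝ} {w : X → ℝ}

theorem abs_sub_le_of_segment_diff_subset (hcont : ContinuousOn w (closure Ω))
    (hdiff : ∀ x ∈ Ω, DifferentiableAt ℝ w x) (hder : ∀ x ∈ Ω, ‖fderiv ℝ w x‖ ≤ K) {x y : X}
    (hy : y ∈ closure Ω) (hseg : [x -[ℝ] y] \ {y} ⊆ Ω) :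
    |w x - w y| ≤ K * dist x y := by
  rcases eq_or_ne x y with rfl | hxy
  · simp
  have hmem : ∀ t ∈ Ioo (0 : ℝ) 1, lineMap x y t ∈ Ω := fun t ht =>
    hseg ⟨lineMap_mem_segment ℝ x y (Ioo_subset_Icc_self ht), by simp [hxy, ht.2.ne]⟩
  have hcont' : ContinuousOn (fun t : ℝ => w (lineMap x y t)) (Icc 0 1) := by
    refine hcont.comp lineMap_continuous.continuousOn fun t ht => ?_
    by_cases hty : lineMap x y t = y
    · rw [hty]; exact hy
    · exact subset_closure (hseg ⟨lineMap_mem_segment ℝ x y ht, hty⟩)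
  obtain ⟨c, hc, hslope⟩ := exists_hasDerivAt_eq_slope (fun t => w (lineMap x y t))
    (fun t => fderiv ℝ w (lineMap x y t) (y - x)) zero_lt_one hcont'
    fun t ht => (hdiff _ (hmem t ht)).hasFDerivAt.comp_hasDerivAt t hasDerivAt_lineMap
  simp only [lineMap_apply_zero, lineMap_apply_one, sub_zero, div_one] at hslope
  calc |w x - w y| = ‖fderiv ℝ w (lineMap x y c) (y - x)‖ := by
        rw [hslope, Real.norm_eq_abs, abs_sub_comm]
    _ ≤ ‖fderiv ℝ w (lineMap x y c)‖ * ‖y - x‖ := ContinuousLinearMap.le_opNorm _ _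
    _ ≤ K * dist x y := by
        rw [dist_eq_norm']
        exact mul_le_mul_of_nonneg_right (hder _ (hmem c hc)) (norm_nonneg _)

theorem abs_sub_le_of_mem_frontier (hΩ : IsOpen Ω) (hcont : ContinuousOn w (closure Ω))
    (hdiff : ∀ x ∈ Ω, DifferentiableAt ℝ w x) (hbd : IsLipschitzWithOn K w (frontier Ω))
    (hder : ∀ x ∈ Ω, ‖fderiv ℝ w x‖ ≤ K) {p y : X} (hp : p ∈ frontier Ω) (hy : y ∈ closure Ω) :
    |w p - w y| ≤ K * dist p y := by
  obtain ⟨q, hq, hqΩ, hyq⟩ := hΩ.exists_mem_frontier_segment_diff_subset hy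
    (right_mem_segment ℝ y p) (hΩ.frontier_eq ▸ hp).2
  rw [segment_symm] at hq
  refine abs_sub_le_mul_dist_of_mem_segment hq (hbd p hp q hqΩ) ?_
  rw [abs_sub_comm, dist_comm]
  exact abs_sub_le_of_segment_diff_subset hcont hdiff hder (frontier_subset_closure hqΩ) hyq

end

theorem stmt_10_general {X : Type*} [NormedAddCommGroup X] [NormedSpace ℝ X]
    (Ω : Set X) (hΩ : IsOpen Ω) (K : ℝ) (w : X → ℝ)
    (hcont : ContinuousOn w (closure Ω))
    (hdiff : ∀ x ∈ Ω, DifferentiableAt ℝ w x)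
    (hbd : IsLipschitzWithOn K w (frontier Ω))
    (hder : ∀ x ∈ Ω, ‖fderiv ℝ w x‖ ≤ K) :
    IsLipschitzWithOn K w (closure Ω) := by
  intro x hx y hy
  by_cases hseg : [x -[ℝ] y] ⊆ Ω
  · exact abs_sub_le_of_segment_diff_subset hcont hdiff hder hy (sdiff_subset.trans hseg)
  obtain ⟨z, hz, hzΩ⟩ := not_subset.1 hseg
  obtain ⟨p, hp, hpΩ, hxp⟩ := hΩ.exists_mem_frontier_segment_diff_subset hx hz hzΩ
  exact abs_sub_le_mul_dist_of_mem_segment hp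
    (abs_sub_le_of_segment_diff_subset hcont hdiff hder (frontier_subset_closure hpΩ) hxp)
    (abs_sub_le_of_mem_frontier hΩ hcont hdiff hbd hder hpΩ hy)

/-- Fact: a function continuous on `cl(Ω)`, differentiable on `Ω` with `‖Dw‖_* ≤ K` there,
and `K`-Lipschitz on `∂Ω`, is `K`-Lipschitz on `cl(Ω)`. -/
theorem stmt_10 {X : Type*} [NormedAddCommGroup X] [NormedSpace ℝ X] [CompleteSpace X]
    (Ω : Set X) (hΩ : IsOpen Ω) (K : ℝ) (hK : 0 ≤ K) (w : X → ℝ)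
    (hcont : ContinuousOn w (closure Ω))
    (hdiff : ∀ x ∈ Ω, DifferentiableAt ℝ w x)
    (hbd : IsLipschitzWithOn K w (frontier Ω))
    (hder : ∀ x ∈ Ω, ‖fderiv ℝ w x‖ ≤ K) :
    IsLipschitzWithOn K w (closure Ω) :=
  stmt_10_general Ω hΩ K w hcont hdiff hbd hder
end

section
/- Let X be a (not necessarily separable) Hilbert space, let f : X → ℝ be a K-Lipschitz function and let ε > 0. Then there exists a function g : X → ℝ of class C¹ such that |g − f| ≤ ε on X and lip(g, B(x₀,r)) ≤ lip(f, B(x₀, r+ε)) + ε for every closed ball B(x₀,r) ⊂ X. -/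
open Metric Set MeasureTheory

/-!
Lasry–Lions regularization. The inf-convolution `u = infConv f t` stays within `t K² / 2`
of `f`, and it is semiconcave: `u - ‖·‖² / (2t)` is an infimum of affine functions. Hence for
`s < t` the objective `y ↦ -u y + ‖x - y‖² / (2s)` of the sup-convolution of `u` is
`(1/s - 1/t)`-strongly convex. In a Hilbert space it therefore has a unique minimizer `Y x`
(minimizing sequences are Cauchy), `Y` is Lipschitz, and the sup-convolution is `C¹` with
gradient `(x - Y x) / s`. Both convolutions only use competitors within `2tK` of the base
point, so a Lipschitz bound of `f` on a ball passes to the regularization on a ball whose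
radius is smaller by `2(s + t)K`.
-/

open scoped NNReal RealInnerProductSpace
open Filter

section PseudoMetricSpace

variable {α : Type*} [PseudoMetricSpace α]

lemma isLipschitzWithOn_of_le_add_mul {f : α → ℝ} {L : ℝ} {s : Set α}
    (h : ∀ a ∈ s, ∀ b ∈ s, f a ≤ f b + L * dist a b) : IsLipschitzWithOn L f s := by
  intro a ha b hb
  rw [abs_sub_le_iff]
  exact ⟨by linarith [h a ha b hb], by linarith [dist_comm a b ▸ h b hb a ha]⟩

lemma IsLipschitzWithOn.mono_s13 {f : α → ℝ} {L : ℝ} {s t : Set α} (hf : IsLipschitzWithOn L f s)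
    (hts : t ⊆ s) : IsLipschitzWithOn L f t :=
  fun a ha b hb => hf a (hts ha) b (hts hb)

lemma IsLipschitzWithOn.neg {f : α → ℝ} {L : ℝ} {s : Set α} (hf : IsLipschitzWithOn L f s) :
    IsLipschitzWithOn L (fun x => -f x) s := by
  intro a ha b hb
  rw [neg_sub_neg, abs_sub_comm]
  exact hf a ha b hb

lemma lipOn_le_lipOn {f g : α → ℝ} {s t : Set α} (hf : ∃ L, 0 < L ∧ IsLipschitzWithOn L f s)
    (h : ∀ L, 0 < L → IsLipschitzWithOn L f s → IsLipschitzWithOn L g t) :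
    lipOn g t ≤ lipOn f s :=
  csInf_le_csInf ⟨0, fun _ hL => hL.1.le⟩ hf fun L hL => ⟨hL.1, h L hL.1 hL.2⟩

end PseudoMetricSpace

section NormedSpace

variable {E : Type*} [NormedAddCommGroup E] [NormedSpace ℝ E]

lemma hasFDerivAt_of_norm_sub_le_sq {F : Type*} [NormedAddCommGroup F] [NormedSpace ℝ F]
    {f : E → F} {f' : E →L[ℝ] F} {x : E} {c : ℝ}
    (h : ∀ k, ‖f (x + k) - f x - f' k‖ ≤ c * ‖k‖ ^ 2) : HasFDerivAt f f' x := by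
  rw [hasFDerivAt_iff_isLittleO_nhds_zero]
  refine (Asymptotics.IsBigO.of_bound c (Eventually.of_forall fun k => ?_)).trans_isLittleO
    (Asymptotics.isLittleO_norm_pow_id one_lt_two)
  simpa using h k

variable {φ : E → ℝ} {m : ℝ}

lemma StrongConvexOn.midpoint_le (hφ : StrongConvexOn univ m φ) (y z : E) :
    φ ((2⁻¹ : ℝ) • y + (2⁻¹ : ℝ) • z) ≤ (φ y + φ z) / 2 - m / 8 * ‖y - z‖ ^ 2 := by
  have := hφ.2 (mem_univ y) (mem_univ z) (by norm_num : (0 : ℝ) ≤ 2⁻¹)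
    (by norm_num : (0 : ℝ) ≤ 2⁻¹) (by norm_num)
  simp only [smul_eq_mul] at this
  linarith

lemma StrongConvexOn.add_sq_le_of_forall_le (hφ : StrongConvexOn univ m φ) {w : E}
    (hw : ∀ z, φ w ≤ φ z) (z : E) : φ w + m / 4 * ‖z - w‖ ^ 2 ≤ φ z := by
  have := hφ.midpoint_le w z
  rw [norm_sub_rev]
  linarith [hw ((2⁻¹ : ℝ) • w + (2⁻¹ : ℝ) • z)]

lemma StrongConvexOn.exists_forall_le [CompleteSpace E] (hφ : StrongConvexOn univ m φ)
    (hm : 0 < m) (hc : Continuous φ) (hb : BddBelow (range φ)) : ∃ w, ∀ z, φ w ≤ φ z := by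
  obtain ⟨u, -, hu, hmem⟩ := exists_seq_tendsto_sInf (range_nonempty φ) hb
  choose y hy using hmem
  have hinf : ∀ z, sInf (range φ) ≤ φ z := fun z => csInf_le hb ⟨z, rfl⟩
  have hcauchy : CauchySeq y := by
    refine Metric.cauchySeq_iff'.2 fun ε hε => ?_
    have hδ : 0 < m * ε ^ 2 / 8 := by positivity
    obtain ⟨N, hN⟩ := eventually_atTop.1 (hu.eventually (gt_mem_nhds (lt_add_of_pos_right _ hδ)))
    refine ⟨N, fun n hn => ?_⟩
    have hmid := hφ.midpoint_le (y n) (y N)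
    have hsq : ‖y n - y N‖ ^ 2 < ε ^ 2 := by
      nlinarith [hinf ((2⁻¹ : ℝ) • y n + (2⁻¹ : ℝ) • y N), hN n hn, hN N le_rfl, hy n, hy N]
    rw [dist_eq_norm]
    exact lt_of_pow_lt_pow_left₀ 2 hε.le hsq
  obtain ⟨w, hw⟩ := cauchySeq_tendsto_of_complete hcauchy
  have hφw : φ w = sInf (range φ) :=
    tendsto_nhds_unique ((hc.tendsto w).comp hw) (by simpa [Function.comp_def, hy] using hu)
  exact ⟨w, fun z => hφw ▸ hinf z⟩

end NormedSpace

section InfConv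

variable {E : Type*} [NormedAddCommGroup E]

/-- `⨅` over `ℝ` is junk (`0`) for a family unbounded below; for `LipschitzWith K f` and `0 < t`
the family is bounded below (`LipschitzWith.bddBelow_range_add_sq_div`). -/
noncomputable def infConv (f : E → ℝ) (t : ℝ) (x : E) : ℝ :=
  ⨅ y, f y + ‖x - y‖ ^ 2 / (2 * t)

variable {f : E → ℝ} {t : ℝ}

lemma le_infConv {x : E} {c : ℝ} (h : ∀ y, c ≤ f y + ‖x - y‖ ^ 2 / (2 * t)) :
    c ≤ infConv f t x :=
  le_ciInf h

lemma infConv_le {x : E} (hb : BddBelow (range fun y => f y + ‖x - y‖ ^ 2 / (2 * t))) (y : E) :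
    infConv f t x ≤ f y + ‖x - y‖ ^ 2 / (2 * t) :=
  ciInf_le hb y

def IsProxMap (v : E → ℝ) (s : ℝ) (Y : E → E) : Prop :=
  ∀ x z, v (Y x) + ‖x - Y x‖ ^ 2 / (2 * s) ≤ v z + ‖x - z‖ ^ 2 / (2 * s)

lemma IsProxMap.infConv_eq {v : E → ℝ} {s : ℝ} {Y : E → E} (hY : IsProxMap v s Y) (x : E) :
    infConv v s x = v (Y x) + ‖x - Y x‖ ^ 2 / (2 * s) :=
  le_antisymm (infConv_le ⟨_, forall_mem_range.2 (hY x)⟩ _) (le_infConv (hY x))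

variable {K : ℝ≥0} (hf : LipschitzWith K f) (ht : 0 < t)
include hf ht

lemma LipschitzWith.sub_le_add_sq_div (x y : E) :
    f x - t * K ^ 2 / 2 ≤ f y + ‖x - y‖ ^ 2 / (2 * t) := by
  have hxy : f x ≤ f y + K * ‖x - y‖ := by simpa [dist_eq_norm] using hf.le_add_mul x y
  have hamgm : (K : ℝ) * ‖x - y‖ ≤ t * K ^ 2 / 2 + ‖x - y‖ ^ 2 / (2 * t) := by
    rw [div_add_div _ _ two_ne_zero (by positivity), le_div_iff₀ (by positivity)]
    nlinarith [sq_nonneg (t * K - ‖x - y‖)]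
  linarith

lemma LipschitzWith.bddBelow_range_add_sq_div (x : E) :
    BddBelow (range fun y => f y + ‖x - y‖ ^ 2 / (2 * t)) :=
  ⟨_, forall_mem_range.2 (hf.sub_le_add_sq_div ht x)⟩

lemma LipschitzWith.infConv_le_self (x : E) : infConv f t x ≤ f x := by
  simpa using infConv_le (hf.bddBelow_range_add_sq_div ht x) x

lemma LipschitzWith.sub_le_infConv (x : E) : f x - t * K ^ 2 / 2 ≤ infConv f t x :=
  le_infConv (hf.sub_le_add_sq_div ht x)

lemma LipschitzWith.infConv_le_shift (a b y : E) :
    infConv f t a ≤ f (y + (a - b)) + ‖b - y‖ ^ 2 / (2 * t) := by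
  simpa [sub_add_eq_sub_sub, sub_sub_cancel_left, norm_neg]
    using infConv_le (hf.bddBelow_range_add_sq_div ht a) (y + (a - b))

lemma lipschitzWith_infConv : LipschitzWith K (infConv f t) := by
  refine LipschitzWith.of_le_add_mul K fun a b => ?_
  rw [← sub_le_iff_le_add]
  refine le_infConv fun y => ?_
  have hshift := hf.le_add_mul (y + (a - b)) y
  rw [dist_eq_norm, add_sub_cancel_left, ← dist_eq_norm] at hshift
  linarith [hf.infConv_le_shift ht a b y]

lemma LipschitzWith.neg_infConv : LipschitzWith K fun y => -infConv f t y :=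
  LipschitzWith.of_dist_le_mul fun a b => by
    simpa only [dist_neg_neg] using (lipschitzWith_infConv hf ht).dist_le_mul a b

lemma IsLipschitzWithOn.infConv {L R : ℝ} {x₀ : E}
    (hL : IsLipschitzWithOn L f (closedBall x₀ (R + 2 * t * K))) :
    IsLipschitzWithOn L (infConv f t) (closedBall x₀ R) := by
  have hK : (0 : ℝ) ≤ 2 * t * K := by positivity
  refine isLipschitzWithOn_of_le_add_mul fun a ha b hb => ?_
  rw [mem_closedBall] at ha hb
  rw [← sub_le_iff_le_add]
  refine le_infConv fun y => ?_
  -- A competitor `y` for `b` with `‖b - y‖ ≥ 2tK` does no better than `b` itself; a nearer one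
  -- is translated to the competitor `y + (a - b)` for `a`, which stays in the larger ball.
  rcases le_total ‖b - y‖ (2 * t * K) with hnear | hfar
  · have hy : y ∈ closedBall x₀ (R + 2 * t * K) := by
      rw [mem_closedBall]
      linarith [dist_triangle y b x₀, dist_eq_norm' y b]
    have hya : y + (a - b) ∈ closedBall x₀ (R + 2 * t * K) := by
      have : dist (y + (a - b)) a = ‖b - y‖ := by
        rw [dist_eq_norm, ← norm_neg]; congr 1; abel
      rw [mem_closedBall]
      linarith [dist_triangle (y + (a - b)) a x₀]
    have hshift := hL _ hya y hy
    rw [dist_eq_norm, add_sub_cancel_left, ← dist_eq_norm] at hshift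
    linarith [hf.infConv_le_shift ht a b y, (abs_le.1 hshift).2]
  · have hab := hL a (closedBall_subset_closedBall (by linarith) ha) b
      (closedBall_subset_closedBall (by linarith) hb)
    have hby : f b ≤ f y + K * ‖b - y‖ := by simpa [dist_eq_norm] using hf.le_add_mul b y
    have hquad : (K : ℝ) * ‖b - y‖ ≤ ‖b - y‖ ^ 2 / (2 * t) := by
      rw [le_div_iff₀ (by positivity)]
      nlinarith [norm_nonneg (b - y)]
    linarith [hf.infConv_le_self ht a, (abs_le.1 hab).2]

end InfConv

section LasryLions

variable {E : Type*} [NormedAddCommGroup E]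

/-- The sup-convolution `x ↦ ⨆ y, infConv f t y - ‖x - y‖² / (2s)` of the inf-convolution,
written as `-infConv (-infConv f t) s`. -/
noncomputable def lasryLions (f : E → ℝ) (t s : ℝ) (x : E) : ℝ :=
  -infConv (fun y => -infConv f t y) s x

variable {f : E → ℝ} {K : ℝ≥0} {t s : ℝ}

lemma abs_lasryLions_sub_le (hf : LipschitzWith K f) (hs : 0 < s) (hst : s ≤ t) (x : E) :
    |lasryLions f t s x - f x| ≤ t * K ^ 2 / 2 := by
  have ht := hs.trans_le hst
  have h₁ := (hf.neg_infConv ht).infConv_le_self hs x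
  have h₂ := (hf.neg_infConv ht).sub_le_infConv hs x
  have h₃ := hf.infConv_le_self ht x
  have h₄ := hf.sub_le_infConv ht x
  have h₅ : s * K ^ 2 / 2 ≤ t * K ^ 2 / 2 := by gcongr
  rw [lasryLions, abs_le]
  constructor <;> linarith

lemma IsLipschitzWithOn.lasryLions (hf : LipschitzWith K f) (hs : 0 < s) (ht : 0 < t)
    {L R : ℝ} {x₀ : E} (hL : IsLipschitzWithOn L f (closedBall x₀ (R + 2 * s * K + 2 * t * K))) :
    IsLipschitzWithOn L (lasryLions f t s) (closedBall x₀ R) :=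
  ((hL.infConv hf ht).neg.infConv (hf.neg_infConv ht) hs).neg

end LasryLions

section InnerProductSpace

variable {X : Type*} [NormedAddCommGroup X] [InnerProductSpace ℝ X]

lemma norm_smul_add_smul_sub_sq {a b : ℝ} (hab : a + b = 1) (x y w : X) :
    ‖a • x + b • y - w‖ ^ 2 = a * ‖x - w‖ ^ 2 + b * ‖y - w‖ ^ 2 - a * b * ‖x - y‖ ^ 2 := by
  obtain rfl : b = 1 - a := by linarith
  have h₁ : a • x + (1 - a) • y - w = a • (x - w) + (1 - a) • (y - w) := by module
  have h₂ : x - y = (x - w) - (y - w) := by abel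
  rw [h₁, h₂]
  generalize x - w = p
  generalize y - w = q
  rw [norm_add_sq_real, norm_sub_sq_real, norm_smul, norm_smul, real_inner_smul_left,
    real_inner_smul_right, mul_pow, mul_pow, Real.norm_eq_abs, Real.norm_eq_abs, sq_abs, sq_abs]
  ring

lemma LipschitzWith.concaveOn_infConv_sub_sq {f : X → ℝ} {K : ℝ≥0} {t : ℝ}
    (hf : LipschitzWith K f) (ht : 0 < t) :
    ConcaveOn ℝ univ fun x => infConv f t x - ‖x‖ ^ 2 / (2 * t) := by
  refine ⟨convex_univ, fun x _ y _ a b ha hb hab => ?_⟩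
  simp only [smul_eq_mul]
  rw [le_sub_iff_add_le]
  refine le_infConv fun w => ?_
  have hx := infConv_le (hf.bddBelow_range_add_sq_div ht x) w
  have hy := infConv_le (hf.bddBelow_range_add_sq_div ht y) w
  have hw := norm_smul_add_smul_sub_sq hab x y w
  have h0 := norm_smul_add_smul_sub_sq hab x y 0
  simp only [sub_zero] at h0
  linear_combination a * hx + b * hy + (2 * t)⁻¹ * (h0 - hw) + f w * hab

section IsProxMap

variable {v : X → ℝ} {s m : ℝ} {Y : X → X}
  (hY : IsProxMap v s Y) (hs : 0 < s) (hm : 0 < m)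
  (hφ : ∀ x, StrongConvexOn univ m fun y => v y + ‖x - y‖ ^ 2 / (2 * s))
include hY hs hm hφ

lemma IsProxMap.norm_sub_le (x x' : X) : ‖Y x - Y x'‖ ≤ 2 / (m * s) * ‖x - x'‖ := by
  have h₁ := (hφ x).add_sq_le_of_forall_le (hY x) (Y x')
  have h₂ := (hφ x').add_sq_le_of_forall_le (hY x') (Y x)
  have hpol : ‖x - Y x'‖ ^ 2 - ‖x' - Y x'‖ ^ 2 + ‖x' - Y x‖ ^ 2 - ‖x - Y x‖ ^ 2
      = 2 * ⟪x - x', Y x - Y x'⟫ := by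
    simp only [norm_sub_sq_real, inner_sub_left, inner_sub_right]
    ring
  have hcs := real_inner_le_norm (x - x') (Y x - Y x')
  rw [norm_sub_rev (Y x') (Y x)] at h₁
  have hkey : m * s * ‖Y x - Y x'‖ ^ 2 ≤ 2 * ‖x - x'‖ * ‖Y x - Y x'‖ := by
    have hs' : s * s⁻¹ = 1 := mul_inv_cancel₀ hs.ne'
    linear_combination (2 * s) * h₁ + (2 * s) * h₂ + hpol + 2 * hcs +
      (‖x - Y x'‖ ^ 2 + ‖x' - Y x‖ ^ 2 - ‖x - Y x‖ ^ 2 - ‖x' - Y x'‖ ^ 2) * hs'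
  rw [div_mul_eq_mul_div, le_div_iff₀ (by positivity)]
  rcases (norm_nonneg (Y x - Y x')).eq_or_lt with h0 | hpos
  · rw [← h0, zero_mul]; positivity
  · exact le_of_mul_le_mul_left (by nlinarith) hpos

lemma IsProxMap.hasFDerivAt_infConv (x : X) :
    HasFDerivAt (infConv v s) (s⁻¹ • innerSL ℝ (x - Y x)) x := by
  refine hasFDerivAt_of_norm_sub_le_sq (c := (2 / (m * s) + 1) / s) fun k => ?_
  have hup := infConv_le ⟨_, forall_mem_range.2 (hY (x + k))⟩ (Y x)
  have hlow := infConv_le ⟨_, forall_mem_range.2 (hY x)⟩ (Y (x + k))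
  rw [hY.infConv_eq] at hup hlow
  rw [hY.infConv_eq, hY.infConv_eq]
  have hYk := hY.norm_sub_le hs hm hφ x (x + k)
  rw [sub_add_cancel_left, norm_neg] at hYk
  have hcs := abs_real_inner_le_norm (Y x - Y (x + k)) k
  have e₁ : ‖x + k - Y x‖ ^ 2 = ‖x - Y x‖ ^ 2 + 2 * ⟪x - Y x, k⟫ + ‖k‖ ^ 2 := by
    rw [add_sub_right_comm, norm_add_sq_real]
  have e₂ : ‖x + k - Y (x + k)‖ ^ 2
      = ‖x - Y (x + k)‖ ^ 2 + 2 * ⟪x - Y (x + k), k⟫ + ‖k‖ ^ 2 := by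
    rw [add_sub_right_comm, norm_add_sq_real]
  have e₃ : ⟪x - Y (x + k), k⟫ = ⟪x - Y x, k⟫ + ⟪Y x - Y (x + k), k⟫ := by
    rw [← inner_add_left, sub_add_sub_cancel]
  simp only [FunLike.coe_smul, Pi.smul_apply, innerSL_apply_apply, smul_eq_mul]
  have hinner : -(2 / (m * s) * ‖k‖ ^ 2) ≤ ⟪Y x - Y (x + k), k⟫ := by
    have := (abs_le.1 hcs).1
    nlinarith [norm_nonneg k]
  have hC : 0 ≤ 2 / (m * s) * s⁻¹ * ‖k‖ ^ 2 := by positivity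
  have hk : 0 ≤ s⁻¹ * ‖k‖ ^ 2 := by positivity
  rw [Real.norm_eq_abs, abs_le]
  constructor
  · linear_combination hlow - (2 * s)⁻¹ * e₂ - s⁻¹ * e₃ + s⁻¹ * hinner + 3 / 2 * hk
  · linear_combination hup + (2 * s)⁻¹ * e₁ + hC + hk / 2

lemma IsProxMap.contDiff_infConv : ContDiff ℝ 1 (infConv v s) := by
  have hYc : Continuous Y := (LipschitzWith.of_dist_le' fun x x' => by
    simpa only [dist_eq_norm] using hY.norm_sub_le hs hm hφ x x').continuous
  exact contDiff_one_iff_hasFDerivAt.2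
    ⟨fun x => s⁻¹ • innerSL ℝ (x - Y x), by fun_prop, hY.hasFDerivAt_infConv hs hm hφ⟩

end IsProxMap

lemma contDiff_infConv_of_convexOn [CompleteSpace X] {v : X → ℝ} {K : ℝ≥0} {s t : ℝ}
    (hv : LipschitzWith K v) (hconv : ConvexOn ℝ univ fun y => v y + ‖y‖ ^ 2 / (2 * t))
    (hs : 0 < s) (hst : s < t) : ContDiff ℝ 1 (infConv v s) := by
  have hm : 0 < 1 / s - 1 / t := sub_pos.2 (one_div_lt_one_div_of_lt hs hst)
  have hφ : ∀ x, StrongConvexOn univ (1 / s - 1 / t) fun y => v y + ‖x - y‖ ^ 2 / (2 * s) := by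
    intro x
    rw [strongConvexOn_iff_convex]
    refine (hconv.add ((((-s⁻¹) • innerSL ℝ x).toLinearMap.convexOn convex_univ).add_const
      (‖x‖ ^ 2 / (2 * s)))).congr fun y _ => ?_
    simp only [Pi.add_apply, ContinuousLinearMap.coe_coe, FunLike.coe_smul, Pi.smul_apply,
      innerSL_apply_apply, smul_eq_mul, norm_sub_sq_real]
    field_simp
    ring
  have hc : ∀ x, Continuous fun y => v y + ‖x - y‖ ^ 2 / (2 * s) := by
    have := hv.continuous
    fun_prop
  choose Y hY using fun x =>
    (hφ x).exists_forall_le hm (hc x) (hv.bddBelow_range_add_sq_div hs x)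
  exact IsProxMap.contDiff_infConv hY hs hm hφ

lemma contDiff_lasryLions [CompleteSpace X] {f : X → ℝ} {K : ℝ≥0} {t s : ℝ}
    (hf : LipschitzWith K f) (hs : 0 < s) (hst : s < t) :
    ContDiff ℝ 1 (lasryLions f t s) := by
  have ht := hs.trans hst
  have hconv : ConvexOn ℝ univ fun y => -infConv f t y + ‖y‖ ^ 2 / (2 * t) :=
    (hf.concaveOn_infConv_sub_sq ht).neg.congr fun y _ => by
      simp only [Pi.neg_apply, neg_sub]; ring
  exact (contDiff_infConv_of_convexOn (hf.neg_infConv ht) hconv hs hst).neg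

end InnerProductSpace

/-- Lemma (general Hilbert case): uniform approximation of a `K`-Lipschitz function by
`C¹` functions almost preserving local Lipschitz constants on balls. -/
theorem stmt_13 {X : Type*} [NormedAddCommGroup X] [InnerProductSpace ℝ X] [CompleteSpace X]
    (K : ℝ) (f : X → ℝ) (hf : IsLipschitzWithOn K f Set.univ) (ε : ℝ) (hε : 0 < ε) :
    ∃ g : X → ℝ,
      ContDiff ℝ 1 g ∧
      (∀ x : X, |g x - f x| ≤ ε) ∧
      (∀ (x₀ : X) (r : ℝ), 0 < r →
        lipOn g (closedBall x₀ r) ≤ lipOn f (closedBall x₀ (r + ε)) + ε) := by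
  set K₀ := K.toNNReal
  have hf₀ : LipschitzWith K₀ f := LipschitzWith.of_dist_le' fun x y => by
    simpa only [Real.dist_eq] using hf x (mem_univ x) y (mem_univ y)
  -- small enough that `t K₀² / 2 ≤ ε` and that the radius loss `2 (t/2 + t) K₀` is at most `ε`
  set t := ε / (3 * (K₀ + 1) ^ 2)
  have ht : 0 < t := by positivity
  have htK : t * (3 * (K₀ + 1) ^ 2) = ε := div_mul_cancel₀ _ (by positivity)
  have hK : (0 : ℝ) ≤ K₀ := K₀.2
  have hs : 0 < t / 2 := by positivity
  have hst : t / 2 < t := by linarith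
  refine ⟨lasryLions f t (t / 2), contDiff_lasryLions hf₀ hs hst, fun x => ?_, fun x₀ r _ => ?_⟩
  · exact (abs_lasryLions_sub_le hf₀ hs hst.le x).trans (by nlinarith)
  · have hne : ∃ L, 0 < L ∧ IsLipschitzWithOn L f (closedBall x₀ (r + ε)) :=
      ⟨K₀ + 1, by positivity, fun a _ b _ => by
        rw [← Real.dist_eq]; exact (hf₀.dist_le_mul a b).trans (by gcongr; linarith)⟩
    refine (lipOn_le_lipOn hne fun L _ hL => ?_).trans (le_add_of_nonneg_right hε.le)
    refine (hL.mono_s13 (closedBall_subset_closedBall ?_)).lasryLions hf₀ hs ht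
    nlinarith
end

section
/- Equip ℝ² with the ℓ₁ norm ‖(x,y)‖₁ = |x| + |y|, let Ω = {(x,y) ∈ ℝ² : x² + y² < 1}, and define u₀(x,y) = |x| − |y| for (x,y) ∈ ∂Ω. Then: (i) u₀ is 1-Lipschitz on ∂Ω with respect to the ℓ₁ distance; and (ii) every function u : cl(Ω) → ℝ which is 1-Lipschitz with respect to the ℓ₁ distance and satisfies u = u₀ on ∂Ω must satisfy u(x,0) = |x| for every x ∈ [−1,1], and in particular u is not differentiable at (0,0). -/
/-!
Since `u₀ = 1` at `(±1, 0)` and `u₀ = -1` at `(0, 1)`, the `ℓ₁`-distances from `(x, 0)` to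
`(±1, 0)` force `u(x, 0) ≥ |x|`, while the distance to `(0, 1)` forces `u(x, 0) ≤ |x|`.
The restriction of `u` to the horizontal diameter is therefore `|x|`, which is not
differentiable at `0`.
-/

open Metric Set MeasureTheory

open Filter Topology

theorem abs_sub_abs_sub_sub_abs_sub_abs_le {α : Type*} [AddCommGroup α] [LinearOrder α]
    [IsOrderedAddMonoid α] (a b c d : α) :
    |(|a| - |b|) - (|c| - |d|)| ≤ |a - c| + |b - d| :=
  calc |(|a| - |b|) - (|c| - |d|)| = |(|a| - |c|) - (|b| - |d|)| := by abel_nf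
    _ ≤ |(|a| - |c|)| + |(|b| - |d|)| := abs_sub _ _
    _ ≤ |a - c| + |b - d| :=
      add_le_add (abs_abs_sub_abs_le_abs_sub a c) (abs_abs_sub_abs_le_abs_sub b d)

theorem eq_abs_of_abs_sub_one_le {v x : ℝ} (h₁ : |v - 1| ≤ 1 - x) (h₂ : |v - 1| ≤ 1 + x)
    (h₃ : |v + 1| ≤ |x| + 1) : v = |x| := by
  have hv₁ := (abs_le.mp h₁).1
  have hv₂ := (abs_le.mp h₂).1
  have hv₃ := (abs_le.mp h₃).2
  rcases abs_cases x with ⟨hx, _⟩ | ⟨hx, _⟩ <;> rw [hx] at hv₃ ⊢ <;> linarith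

theorem eq_abs_on_diameter_of_l1_lipschitz {u : ℝ × ℝ → ℝ}
    (hu : ∀ p q : ℝ × ℝ, p.1 ^ 2 + p.2 ^ 2 ≤ 1 → q.1 ^ 2 + q.2 ^ 2 ≤ 1 →
      |u p - u q| ≤ |p.1 - q.1| + |p.2 - q.2|)
    (hbd : ∀ p : ℝ × ℝ, p.1 ^ 2 + p.2 ^ 2 = 1 → u p = |p.1| - |p.2|)
    {x : ℝ} (hx : x ∈ Icc (-1 : ℝ) 1) : u (x, 0) = |x| := by
  have hdisk : x ^ 2 + (0 : ℝ) ^ 2 ≤ 1 := by nlinarith [hx.1, hx.2]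
  have hright : u (1, 0) = 1 := by simpa using hbd (1, 0) (by norm_num)
  have hleft : u (-1, 0) = 1 := by simpa using hbd (-1, 0) (by norm_num)
  have htop : u (0, 1) = -1 := by simpa using hbd (0, 1) (by norm_num)
  have dright := hu (x, 0) (1, 0) hdisk (by norm_num)
  have dleft := hu (x, 0) (-1, 0) hdisk (by norm_num)
  have dtop := hu (x, 0) (0, 1) hdisk (by norm_num)
  rw [hright, abs_of_nonpos (by linarith [hx.2] : x - 1 ≤ 0)] at dright
  rw [hleft, abs_of_nonneg (by linarith [hx.1] : 0 ≤ x - -1)] at dleft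
  rw [htop] at dtop
  norm_num at dright dleft dtop
  refine eq_abs_of_abs_sub_one_le ?_ ?_ ?_ <;> linarith

theorem not_differentiableAt_of_eventually_eq_abs {E : Type*} [NormedAddCommGroup E]
    [NormedSpace ℝ E] {u : ℝ × E → ℝ} {y : E} (hu : ∀ᶠ x in 𝓝 0, u (x, y) = |x|) :
    ¬ DifferentiableAt ℝ u (0, y) := by
  intro hdiff
  have hline : DifferentiableAt ℝ (fun x : ℝ => u (x, y)) 0 :=
    hdiff.comp (0 : ℝ) (differentiableAt_id.prodMk (differentiableAt_const y))
  exact not_differentiableAt_abs_zero (hline.congr_of_eventuallyEq (hu.mono fun _ h => h.symm))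

/-- Example: on the euclidean unit disk `Ω` of `ℝ²` equipped with the `ℓ₁` norm
`‖(x,y)‖₁ = |x| + |y|`, the boundary datum `u₀(x,y) = |x| − |y|` is 1-Lipschitz on the unit
circle `∂Ω` for the `ℓ₁` distance, and every 1-Lipschitz (for the `ℓ₁` distance) extension
`u` of `u₀` to the closed disk satisfies `u(x,0) = |x|` for all `x ∈ [−1,1]`; in particular
`u` is not differentiable at `(0,0)`. -/
theorem stmt_19 :
    (∀ p q : ℝ × ℝ, p.1 ^ 2 + p.2 ^ 2 = 1 → q.1 ^ 2 + q.2 ^ 2 = 1 →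
      |(|p.1| - |p.2|) - (|q.1| - |q.2|)| ≤ |p.1 - q.1| + |p.2 - q.2|) ∧
    (∀ u : ℝ × ℝ → ℝ,
      (∀ p q : ℝ × ℝ, p.1 ^ 2 + p.2 ^ 2 ≤ 1 → q.1 ^ 2 + q.2 ^ 2 ≤ 1 →
        |u p - u q| ≤ |p.1 - q.1| + |p.2 - q.2|) →
      (∀ p : ℝ × ℝ, p.1 ^ 2 + p.2 ^ 2 = 1 → u p = |p.1| - |p.2|) →
      (∀ x ∈ Icc (-1 : ℝ) 1, u (x, 0) = |x|) ∧
      ¬ DifferentiableAt ℝ u ((0 : ℝ), (0 : ℝ))) := by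
  refine ⟨fun p q _ _ => abs_sub_abs_sub_sub_abs_sub_abs_le _ _ _ _, fun u hu hbd => ?_⟩
  have hdiam : ∀ x ∈ Icc (-1 : ℝ) 1, u (x, 0) = |x| :=
    fun x hx => eq_abs_on_diameter_of_l1_lipschitz hu hbd hx
  refine ⟨hdiam, not_differentiableAt_of_eventually_eq_abs ?_⟩
  filter_upwards [Icc_mem_nhds (by norm_num : (-1 : ℝ) < 0) (by norm_num : (0 : ℝ) < 1)]
    with x hx using hdiam x hx
end
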